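/- Lindenbaum lemma for IMCalc: if Γ ∪ {φ} is a set of L-formulas with Γ ⊬_{IMCalc} φ, then there exists a prime theory Γ' with Γ ⊆ Γ' and φ ∉ Γ'. -/

import Mathlib

/-
Common formalisation of the syntax and semantics of the intuitionistic
monotone modal logic IM, its generalised Hilbert calculi, intuitionistic
neighbourhood models, IFOM-structures, and related constructions.
-/

namespace IMPaper

/-- Formulas of the monotone modal language L. -/
inductive Formula : Type
  | prop : ℕ → Formula
  | bot  : Formula
  | and  : Formula → Formula → Formula
  | or   : Formula → Formula → Formula
  | imp  : Formula → Formula → Formula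
  | box  : Formula → Formula
  | dia  : Formula → Formula
deriving DecidableEq

/-- Negation: ¬φ abbreviates φ → ⊥. -/
def Formula.neg (φ : Formula) : Formula := φ.imp .bot

/-- Top: ⊤ abbreviates ⊥ → ⊥. -/
def Formula.top : Formula := Formula.bot.imp .bot

/-- Substitution of formulas for proposition letters. -/
def Formula.subst (σ : ℕ → Formula) : Formula → Formula
  | .prop i   => σ i
  | .bot      => .bot
  | .and φ ψ  => .and (φ.subst σ) (ψ.subst σ)
  | .or φ ψ   => .or (φ.subst σ) (ψ.subst σ)
  | .imp φ ψ  => .imp (φ.subst σ) (ψ.subst σ)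
  | .box φ    => .box (φ.subst σ)
  | .dia φ    => .dia (φ.subst σ)

private def pp0 : Formula := .prop 0
private def pp1 : Formula := .prop 1
private def pp2 : Formula := .prop 2

/-- A standard axiomatisation of intuitionistic propositional logic. -/
def IpcAx : Set Formula :=
  { Formula.imp pp0 (.imp pp1 pp0),
    Formula.imp (.imp pp0 (.imp pp1 pp2)) (.imp (.imp pp0 pp1) (.imp pp0 pp2)),
    Formula.imp (.and pp0 pp1) pp0,
    Formula.imp (.and pp0 pp1) pp1,
    Formula.imp pp0 (.imp pp1 (.and pp0 pp1)),
    Formula.imp pp0 (.or pp0 pp1),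
    Formula.imp pp1 (.or pp0 pp1),
    Formula.imp (.imp pp0 pp2) (.imp (.imp pp1 pp2) (.imp (.or pp0 pp1) pp2)),
    Formula.imp .bot pp0 }

/-- All substitution instances of a set of formulas. -/
def Instances (Ax : Set Formula) : Set Formula :=
  {φ | ∃ ψ ∈ Ax, ∃ σ, φ = ψ.subst σ}

/-- 𝒜x: all substitution instances of Ax together with all substitution
instances of the axioms of intuitionistic propositional logic. -/
def ScrAx (Ax : Set Formula) : Set Formula := Instances Ax ∪ Instances IpcAx

/-- The generalised Hilbert calculus GHC(Ax). -/
inductive GHC (Ax : Set Formula) : Set Formula → Formula → Prop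
  | el {Γ : Set Formula} {φ : Formula} : φ ∈ Γ → GHC Ax Γ φ
  | ax {Γ : Set Formula} {φ : Formula} : φ ∈ ScrAx Ax → GHC Ax Γ φ
  | mp {Γ : Set Formula} {φ ψ : Formula} :
      GHC Ax Γ φ → GHC Ax Γ (φ.imp ψ) → GHC Ax Γ ψ
  | monBox {Γ : Set Formula} {φ ψ : Formula} :
      GHC Ax ∅ (φ.imp ψ) → GHC Ax Γ ((Formula.box φ).imp (Formula.box ψ))
  | monDia {Γ : Set Formula} {φ ψ : Formula} :
      GHC Ax ∅ (φ.imp ψ) → GHC Ax Γ ((Formula.dia φ).imp (Formula.dia ψ))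

/-- The axioms (neg_a) and (I_◇) of the calculus IMCalc. -/
def IMAx : Set Formula :=
  { Formula.imp ((Formula.box pp0).and (Formula.dia pp0.neg)) .bot,
    Formula.imp ((Formula.box Formula.top).imp (Formula.dia pp0)) (Formula.dia pp0) }

/-- Derivability in the calculus IMCalc = GHC({(□p ∧ ◇¬p) → ⊥, (□⊤ → ◇p) → ◇p}). -/
def IMC : Set Formula → Formula → Prop := GHC IMAx

/-- An intuitionistic neighbourhood: a partial function W ⇀ 𝒫(W), encoded as a
domain together with a (total) value function whose values matter on the domain. -/
structure Nbhd (W : Type) where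
  dom : Set W
  val : W → Set W

/-- The data of an intuitionistic neighbourhood model. -/
structure INStruct (W : Type) where
  le : W → W → Prop
  N : Set (Nbhd W)
  V : ℕ → Set W

variable {W W' : Type}

/-- A set is upward closed w.r.t. the order of the structure. -/
def INStruct.Up (M : INStruct W) (s : Set W) : Prop :=
  ∀ ⦃w v : W⦄, M.le w v → w ∈ s → v ∈ s

/-- `M` is an intuitionistic neighbourhood model: the order is a partial order,
the domain of every neighbourhood is upward closed, and the valuation assigns
upward closed sets to proposition letters. -/
def INStruct.IsModel (M : INStruct W) : Prop :=
  IsPartialOrder W M.le ∧ (∀ a ∈ M.N, M.Up a.dom) ∧ ∀ i, M.Up (M.V i)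

/-- Truth of a formula at a world of an intuitionistic neighbourhood model. -/
def INStruct.sat (M : INStruct W) : Formula → W → Prop
  | .prop i, w  => w ∈ M.V i
  | .bot, _     => False
  | .and φ ψ, w => M.sat φ w ∧ M.sat ψ w
  | .or φ ψ, w  => M.sat φ w ∨ M.sat ψ w
  | .imp φ ψ, w => ∀ v, M.le w v → M.sat φ v → M.sat ψ v
  | .box φ, w   => ∃ a ∈ M.N, w ∈ a.dom ∧
      ∀ w', M.le w w' → ∀ v ∈ a.val w', M.sat φ v
  | .dia φ, w   => ∀ w', M.le w w' → ∀ a ∈ M.N, w' ∈ a.dom →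
      ∃ v ∈ a.val w', M.sat φ v

/-- Semantic consequence over the class of all intuitionistic neighbourhood models. -/
def INConseq (Γ : Set Formula) (φ : Formula) : Prop :=
  ∀ (W : Type) (M : INStruct W), M.IsModel →
    ∀ w : W, (∀ ψ ∈ Γ, M.sat ψ w) → M.sat φ w

/-- A coherent intuitionistic neighbourhood: conditions (N1) and (N2). -/
def INStruct.CoherentNbhd (M : INStruct W) (a : Nbhd W) : Prop :=
  (∀ ⦃w w' : W⦄, M.le w w' → w ∈ a.dom → ∀ v ∈ a.val w, ∃ v' ∈ a.val w', M.le v v') ∧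
  (∀ ⦃w : W⦄, w ∈ a.dom → ∀ v ∈ a.val w, ∀ v', M.le v v' →
      ∃ w', M.le w w' ∧ v' ∈ a.val w')

/-- A model is coherent if all its intuitionistic neighbourhoods are coherent. -/
def INStruct.Coherent (M : INStruct W) : Prop := ∀ a ∈ M.N, M.CoherentNbhd a

/-- Semantic consequence over the class of coherent intuitionistic neighbourhood models. -/
def CohConseq (Γ : Set Formula) (φ : Formula) : Prop :=
  ∀ (W : Type) (M : INStruct W), M.IsModel → M.Coherent →
    ∀ w : W, (∀ ψ ∈ Γ, M.sat ψ w) → M.sat φ w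

/-- The relation R: w R v iff v ∈ a(w) for some neighbourhood a of w. -/
def INStruct.R (M : INStruct W) (w v : W) : Prop :=
  ∃ a ∈ M.N, w ∈ a.dom ∧ v ∈ a.val w

/-- R~-Cartesian: w ≤~ v R~ w implies w = v (with ~ the equivalence closures). -/
def INStruct.RCartesian (M : INStruct W) : Prop :=
  ∀ w v, Relation.EqvGen M.le w v → Relation.EqvGen M.R v w → w = v

/-- N-Cartesian: w R~ v and w, v ∈ dom(a) imply a(w) = a(v). -/
def INStruct.NCartesian (M : INStruct W) : Prop :=
  ∀ a ∈ M.N, ∀ w v, Relation.EqvGen M.R w v → w ∈ a.dom → v ∈ a.dom →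
    a.val w = a.val v

/-- Cartesian: both R~-Cartesian and N-Cartesian. -/
def INStruct.Cartesian (M : INStruct W) : Prop := M.RCartesian ∧ M.NCartesian

/-- Isomorphism of intuitionistic neighbourhood structures. -/
def Isomorphic (M : INStruct W) (M' : INStruct W') : Prop :=
  ∃ (α : W → W') (ν : Nbhd W → Nbhd W'),
    Function.Bijective α ∧ Set.BijOn ν M.N M'.N ∧
    (∀ w v, M.le w v ↔ M'.le (α w) (α v)) ∧
    (∀ a ∈ M.N, ∀ w, w ∈ a.dom ↔ α w ∈ (ν a).dom) ∧
    (∀ a ∈ M.N, ∀ u ∈ a.dom, ∀ w, w ∈ a.val u ↔ α w ∈ (ν a).val (α u)) ∧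
    (∀ i w, w ∈ M.V i ↔ α w ∈ M'.V i)

end IMPaper
namespace IMPaper

/-- A prime theory: deductively closed (for IMCalc), has the disjunction
property, and is consistent. -/
def PrimeTheory (Γ : Set Formula) : Prop :=
  (∀ φ, IMC Γ φ → φ ∈ Γ) ∧
  (∀ φ ψ, Formula.or φ ψ ∈ Γ → φ ∈ Γ ∨ ψ ∈ Γ) ∧
  Formula.bot ∉ Γ

/-- A maximal prime theory: one not properly contained in any other prime theory. -/
def MaxPrime (Γ : Set Formula) : Prop :=
  PrimeTheory Γ ∧ ∀ Δ, PrimeTheory Δ → Γ ⊆ Δ → Δ = Γ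

/-- Worlds of the canonical model: pairs (Γ, n) with Γ a prime theory, where
n = 0 unless Γ is maximal. -/
def CanW : Type :=
  {p : Set Formula × ℕ // PrimeTheory p.1 ∧ (¬ MaxPrime p.1 → p.2 = 0)}

/-- The canonical order: (Γ,n) ⊂< (Γ',n') iff Γ ⊆ Γ' and n ≤ n'. -/
def canLe (p q : CanW) : Prop := p.1.1 ⊆ q.1.1 ∧ p.1.2 ≤ q.1.2

/-- The canonical neighbourhood a_φ, defined at (Γ,n) iff □φ ∈ Γ, with constant
value φ̃ = {(Δ,m) : φ ∈ Δ}. -/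
def canA (φ : Formula) : Nbhd CanW where
  dom := {p | Formula.box φ ∈ p.1.1}
  val := fun _ => {q | φ ∈ q.1.1}

/-- The canonical neighbourhood b_{ψ,Δ,m}: defined exactly on the upset of
(Δ,m), with value W ∖ ψ̃ at (Δ,m) itself and the full set strictly above. -/
def canB (ψ : Formula) (Δm : CanW) : Nbhd CanW where
  dom := {p | canLe Δm p}
  val := fun p => {q | p = Δm → ψ ∉ q.1.1}

/-- The canonical model of IMCalc. -/
def canStruct : INStruct CanW where
  le := canLe
  N := {b | (∃ φ, b = canA φ) ∨
        ∃ (ψ : Formula) (Δm : CanW), Formula.dia ψ ∉ Δm.1.1 ∧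
          Formula.box Formula.top ∈ Δm.1.1 ∧ b = canB ψ Δm}
  V := fun i => {p | Formula.prop i ∈ p.1.1}

end IMPaper
namespace IMPaper

/-! Zorn's lemma gives a set `Δ ⊇ Γ` maximal among the sets not deriving `φ`; chains are harmless
because derivations use finitely many premises. By maximality and the deduction theorem,
`Δ ⊢ ψ → φ` for every `ψ ∉ Δ`, and this one fact yields deductive closure (modus ponens),
the disjunction property (∨-elimination) and consistency (ex falso). -/

namespace GHC

variable {Ax Γ Δ : Set Formula} {φ ψ χ : Formula}

theorem mono (hs : Γ ⊆ Δ) (h : GHC Ax Γ φ) : GHC Ax Δ φ := by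
  induction h generalizing Δ with
  | el h => exact .el (hs h)
  | ax h => exact .ax h
  | mp _ _ ih₁ ih₂ => exact .mp (ih₁ hs) (ih₂ hs)
  | monBox h => exact .monBox h
  | monDia h => exact .monDia h

theorem exists_finite_subset (h : GHC Ax Γ φ) : ∃ Γ₀ ⊆ Γ, Γ₀.Finite ∧ GHC Ax Γ₀ φ := by
  induction h with
  | @el _ ψ h => exact ⟨{ψ}, Set.singleton_subset_iff.2 h, Set.finite_singleton ψ, .el rfl⟩
  | ax h => exact ⟨∅, Set.empty_subset _, Set.finite_empty, .ax h⟩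
  | mp _ _ ih₁ ih₂ =>
    obtain ⟨A, hA, hAfin, dA⟩ := ih₁
    obtain ⟨B, hB, hBfin, dB⟩ := ih₂
    exact ⟨A ∪ B, Set.union_subset hA hB, hAfin.union hBfin,
      .mp (dA.mono Set.subset_union_left) (dB.mono Set.subset_union_right)⟩
  | monBox h => exact ⟨∅, Set.empty_subset _, Set.finite_empty, .monBox h⟩
  | monDia h => exact ⟨∅, Set.empty_subset _, Set.finite_empty, .monDia h⟩

theorem ipc_instance (ψ : Formula) (hψ : ψ ∈ IpcAx) (σ : ℕ → Formula) :
    GHC Ax Γ (ψ.subst σ) :=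
  .ax (Or.inr ⟨ψ, hψ, σ, rfl⟩)

theorem axiomK (ψ χ : Formula) : GHC Ax Γ (ψ.imp (χ.imp ψ)) := by
  simpa [Formula.subst, pp0, pp1] using
    ipc_instance (Ax := Ax) (Γ := Γ) (.imp pp0 (.imp pp1 pp0)) (by simp [IpcAx])
      (fun n => if n = 0 then ψ else χ)

theorem axiomS (ψ χ θ : Formula) :
    GHC Ax Γ ((ψ.imp (χ.imp θ)).imp ((ψ.imp χ).imp (ψ.imp θ))) := by
  simpa [Formula.subst, pp0, pp1, pp2] using
    ipc_instance (Ax := Ax) (Γ := Γ)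
      (.imp (.imp pp0 (.imp pp1 pp2)) (.imp (.imp pp0 pp1) (.imp pp0 pp2))) (by simp [IpcAx])
      (fun n => if n = 0 then ψ else if n = 1 then χ else θ)

theorem or_elim (ψ χ θ : Formula) :
    GHC Ax Γ ((ψ.imp θ).imp ((χ.imp θ).imp ((ψ.or χ).imp θ))) := by
  simpa [Formula.subst, pp0, pp1, pp2] using
    ipc_instance (Ax := Ax) (Γ := Γ)
      (.imp (.imp pp0 pp2) (.imp (.imp pp1 pp2) (.imp (.or pp0 pp1) pp2))) (by simp [IpcAx])
      (fun n => if n = 0 then ψ else if n = 1 then χ else θ)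

theorem efq (ψ : Formula) : GHC Ax Γ (Formula.bot.imp ψ) := by
  simpa [Formula.subst, pp0] using
    ipc_instance (Ax := Ax) (Γ := Γ) (.imp .bot pp0) (by simp [IpcAx]) (fun _ => ψ)

theorem imp_self (ψ : Formula) : GHC Ax Γ (ψ.imp ψ) :=
  .mp (axiomK ψ ψ) (.mp (axiomK ψ (ψ.imp ψ)) (axiomS ψ (ψ.imp ψ) ψ))

theorem deduction (h : GHC Ax (insert χ Γ) φ) : GHC Ax Γ (χ.imp φ) := by
  generalize hΔ : insert χ Γ = Δ at h
  induction h with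
  | el hmem =>
    subst hΔ
    rcases hmem with rfl | hmem
    · exact imp_self _
    · exact .mp (.el hmem) (axiomK _ _)
  | ax hmem => exact .mp (.ax hmem) (axiomK _ _)
  | @mp _ ψ θ _ _ ih₁ ih₂ => exact .mp (ih₁ hΔ) (.mp (ih₂ hΔ) (axiomS χ ψ θ))
  | monBox h => exact .mp (.monBox h) (axiomK _ _)
  | monDia h => exact .mp (.monDia h) (axiomK _ _)

theorem not_derives_sUnion {c : Set (Set Formula)} (hc : IsChain (· ⊆ ·) c) (hne : c.Nonempty)
    (hcφ : ∀ Δ ∈ c, ¬ GHC Ax Δ φ) : ¬ GHC Ax (⋃₀ c) φ := by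
  intro h
  obtain ⟨Γ₀, hΓ₀c, hΓ₀fin, hΓ₀φ⟩ := h.exists_finite_subset
  obtain ⟨Δ, hΔc, hΓ₀Δ⟩ :=
    hc.directedOn.exists_mem_subset_of_finite_of_subset_sUnion hne hΓ₀fin hΓ₀c
  exact hcφ Δ hΔc (hΓ₀φ.mono hΓ₀Δ)

theorem exists_maximal_not_derives (h : ¬ GHC Ax Γ φ) :
    ∃ Δ, Γ ⊆ Δ ∧ Maximal (fun Δ => ¬ GHC Ax Δ φ) Δ :=
  zorn_subset_nonempty {Δ | ¬ GHC Ax Δ φ}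
    (fun c hcφ hc hne =>
      ⟨⋃₀ c, not_derives_sUnion hc hne hcφ, fun _ => Set.subset_sUnion_of_mem⟩)
    Γ h

theorem imp_of_maximal_of_notMem (hΔ : Maximal (fun Δ => ¬ GHC Ax Δ φ) Δ) (hψ : ψ ∉ Δ) :
    GHC Ax Δ (ψ.imp φ) :=
  deduction (not_not.1 fun h => hψ (hΔ.mem_of_prop_insert h))

theorem mem_of_maximal_of_derives (hΔ : Maximal (fun Δ => ¬ GHC Ax Δ φ) Δ) (h : GHC Ax Δ ψ) :
    ψ ∈ Δ :=
  by_contra fun hψ => hΔ.prop (.mp h (imp_of_maximal_of_notMem hΔ hψ))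

theorem mem_or_mem_of_maximal_of_or_mem (hΔ : Maximal (fun Δ => ¬ GHC Ax Δ φ) Δ)
    (h : ψ.or χ ∈ Δ) : ψ ∈ Δ ∨ χ ∈ Δ := by
  by_contra! hψχ
  exact hΔ.prop (.mp (.el h) (.mp (imp_of_maximal_of_notMem hΔ hψχ.2)
    (.mp (imp_of_maximal_of_notMem hΔ hψχ.1) (or_elim ψ χ φ))))

theorem bot_notMem_of_maximal (hΔ : Maximal (fun Δ => ¬ GHC Ax Δ φ) Δ) :
    Formula.bot ∉ Δ :=
  fun h => hΔ.prop (.mp (.el h) (efq φ))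

end GHC

theorem primeTheory_of_maximal {Δ : Set Formula} {φ : Formula}
    (hΔ : Maximal (fun Δ => ¬ IMC Δ φ) Δ) : PrimeTheory Δ :=
  ⟨fun _ => GHC.mem_of_maximal_of_derives hΔ,
    fun _ _ => GHC.mem_or_mem_of_maximal_of_or_mem hΔ, GHC.bot_notMem_of_maximal hΔ⟩

/-- Lindenbaum lemma for IMCalc: if Γ ⊬_{IMCalc} φ then there is
a prime theory Γ' ⊇ Γ with φ ∉ Γ'. -/
theorem lindenbaum (Γ : Set Formula) (φ : Formula) (h : ¬ IMC Γ φ) :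
    ∃ Γ' : Set Formula, PrimeTheory Γ' ∧ Γ ⊆ Γ' ∧ φ ∉ Γ' := by
  obtain ⟨Δ, hΓΔ, hΔ⟩ := GHC.exists_maximal_not_derives h
  exact ⟨Δ, primeTheory_of_maximal hΔ, hΓΔ, fun hφ => hΔ.prop (.el hφ)⟩

end IMPaper
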